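/- For the 8-dimensional Lie algebra L_{8,22} with nonzero brackets [X_1,X_2]=2X_2, [X_1,X_3]=-2X_3, [X_2,X_3]=X_1, [X_1,X_4]=2X_4, [X_1,X_6]=-2X_6, [X_1,X_7]=X_7, [X_1,X_8]=-X_8, [X_2,X_5]=2X_4, [X_2,X_6]=X_5, [X_2,X_8]=X_7, [X_3,X_4]=X_5, [X_3,X_5]=2X_6, [X_3,X_7]=X_8, the polynomials I_1 = x_5^2 - 4x_4x_6 and I_2 = x_4x_8^2 + x_6x_7^2 - x_5x_7x_8 are annihilated by all coadjoint vector fields X̂_i = C_{ij}^k x_k ∂/∂x_j, i = 1,…,8. -/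

import Mathlib

/-!
Indices are shifted: the paper's `xₖ` is `x (k - 1)` here.

Both polynomials involve only the coordinates `x₄, …, x₈` dual to the abelian ideal `ℝ³ ⊕ ℝ²`,
and the fields `X̂₄, …, X̂₈` have no components along those coordinates. For the `sl(2)`
generators one can read `x₄, x₅, x₆` as the binary quadratic form `Q = x₄ a² + x₅ ab + x₆ b²`
and `(x₈, -x₇)` as a vector of the standard representation: then `I₁` is the discriminant
of `Q` and `I₂ = Q(x₈, -x₇)`, both `sl(2)`-invariant.
-/

open scoped BigOperators

noncomputable def Xhat {n : ℕ} (C : Fin n → Fin n → Fin n → ℝ)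
    (F : (Fin n → ℝ) → ℝ) (i : Fin n) (x : Fin n → ℝ) : ℝ :=
  ∑ j, ∑ k, C i j k * x k * fderiv ℝ F x (Pi.single j 1)

def C822 : Fin 8 → Fin 8 → Fin 8 → ℝ := fun i j k =>
  match i.1, j.1, k.1 with
  | 0, 1, 1 => 2
  | 1, 0, 1 => -2
  | 0, 2, 2 => -2
  | 2, 0, 2 => 2
  | 1, 2, 0 => 1
  | 2, 1, 0 => -1
  | 0, 3, 3 => 2
  | 3, 0, 3 => -2
  | 0, 5, 5 => -2
  | 5, 0, 5 => 2
  | 0, 6, 6 => 1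
  | 6, 0, 6 => -1
  | 0, 7, 7 => -1
  | 7, 0, 7 => 1
  | 1, 4, 3 => 2
  | 4, 1, 3 => -2
  | 1, 5, 4 => 1
  | 5, 1, 4 => -1
  | 1, 7, 6 => 1
  | 7, 1, 6 => -1
  | 2, 3, 4 => 1
  | 3, 2, 4 => -1
  | 2, 4, 5 => 2
  | 4, 2, 5 => -2
  | 2, 6, 7 => 1
  | 6, 2, 7 => -1
  | _, _, _ => 0

section CoadjointField

variable {n : ℕ}

def coadjointField (C : Fin n → Fin n → Fin n → ℝ) (i : Fin n) (x : Fin n → ℝ) : Fin n → ℝ :=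
  fun j => ∑ k, C i j k * x k

theorem Xhat_eq_fderiv_coadjointField (C : Fin n → Fin n → Fin n → ℝ) (F : (Fin n → ℝ) → ℝ)
    (i : Fin n) (x : Fin n → ℝ) : Xhat C F i x = fderiv ℝ F x (coadjointField C i x) := by
  conv_rhs => rw [← Finset.univ_sum_single (coadjointField C i x)]
  simp only [Xhat, map_sum]
  refine Finset.sum_congr rfl fun j _ => ?_
  rw [← Finset.sum_mul, ← smul_eq_mul, ← map_smul, ← Pi.single_smul', smul_eq_mul, mul_one]
  rfl

theorem fderiv_apply_apply (i : Fin n) (x v : Fin n → ℝ) :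
    fderiv ℝ (fun y : Fin n → ℝ => y i) x v = v i := by
  rw [(hasFDerivAt_apply i x).fderiv, ContinuousLinearMap.proj_apply]

end CoadjointField

section L822

def casimir₁ (y : Fin 8 → ℝ) : ℝ := (y 4)^2 - 4 * y 3 * y 5

def casimir₂ (y : Fin 8 → ℝ) : ℝ := y 3 * (y 7)^2 + y 5 * (y 6)^2 - y 4 * y 6 * y 7

theorem fderiv_casimir₁_apply (x v : Fin 8 → ℝ) :
    fderiv ℝ casimir₁ x v = 2 * x 4 * v 4 - 4 * (v 3 * x 5 + x 3 * v 5) := by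
  unfold casimir₁
  rw [fderiv_fun_sub (by fun_prop) (by fun_prop), fderiv_fun_pow _ (by fun_prop),
    fderiv_fun_mul (by fun_prop) (by fun_prop), fderiv_const_mul (by fun_prop)]
  simp [fderiv_apply_apply]
  ring

theorem fderiv_casimir₂_apply (x v : Fin 8 → ℝ) :
    fderiv ℝ casimir₂ x v
      = v 3 * (x 7)^2 + 2 * x 3 * x 7 * v 7 + v 5 * (x 6)^2 + 2 * x 5 * x 6 * v 6
        - (v 4 * x 6 * x 7 + x 4 * v 6 * x 7 + x 4 * x 6 * v 7) := by
  unfold casimir₂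
  rw [fderiv_fun_sub (by fun_prop) (by fun_prop), fderiv_fun_add (by fun_prop) (by fun_prop),
    fderiv_fun_mul (by fun_prop) (by fun_prop), fderiv_fun_mul (by fun_prop) (by fun_prop),
    fderiv_fun_mul (by fun_prop) (by fun_prop), fderiv_fun_mul (by fun_prop) (by fun_prop),
    fderiv_fun_pow _ (by fun_prop), fderiv_fun_pow _ (by fun_prop)]
  simp [fderiv_apply_apply]
  ring

variable (i : Fin 8) (x : Fin 8 → ℝ)

theorem coadjointField_C822_three :
    coadjointField C822 i x 3 = ![2 * x 3, 0, x 4, 0, 0, 0, 0, 0] i := by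
  fin_cases i <;> simp [coadjointField, Fin.sum_univ_eight, C822]

theorem coadjointField_C822_four :
    coadjointField C822 i x 4 = ![0, 2 * x 3, 2 * x 5, 0, 0, 0, 0, 0] i := by
  fin_cases i <;> simp [coadjointField, Fin.sum_univ_eight, C822]

theorem coadjointField_C822_five :
    coadjointField C822 i x 5 = ![-2 * x 5, x 4, 0, 0, 0, 0, 0, 0] i := by
  fin_cases i <;> simp [coadjointField, Fin.sum_univ_eight, C822]

theorem coadjointField_C822_six :
    coadjointField C822 i x 6 = ![x 6, 0, x 7, 0, 0, 0, 0, 0] i := by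
  fin_cases i <;> simp [coadjointField, Fin.sum_univ_eight, C822]

theorem coadjointField_C822_seven :
    coadjointField C822 i x 7 = ![-x 7, x 6, 0, 0, 0, 0, 0, 0] i := by
  fin_cases i <;> simp [coadjointField, Fin.sum_univ_eight, C822]

theorem Xhat_C822_casimir₁ : Xhat C822 casimir₁ i x = 0 := by
  rw [Xhat_eq_fderiv_coadjointField, fderiv_casimir₁_apply, coadjointField_C822_three,
    coadjointField_C822_four, coadjointField_C822_five]
  fin_cases i <;> simp <;> ring

theorem Xhat_C822_casimir₂ : Xhat C822 casimir₂ i x = 0 := by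
  rw [Xhat_eq_fderiv_coadjointField, fderiv_casimir₂_apply, coadjointField_C822_three,
    coadjointField_C822_four, coadjointField_C822_five, coadjointField_C822_six,
    coadjointField_C822_seven]
  fin_cases i <;> simp <;> ring

end L822

theorem L822_invariants :
    ∀ (i : Fin 8) (x : Fin 8 → ℝ),
      Xhat C822 (fun y => (y 4)^2 - 4 * y 3 * y 5) i x = 0 ∧
      Xhat C822 (fun y => y 3 * (y 7)^2 + y 5 * (y 6)^2 - y 4 * y 6 * y 7) i x = 0 :=
  fun i x => ⟨Xhat_C822_casimir₁ i x, Xhat_C822_casimir₂ i x⟩
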